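/- arXiv:1910.14478 — 3 statements merged into one kernel-verified Lean document; each statement's English description precedes it below -/
import Mathlib

section
/- Let G be a connected graph on n vertices and k a positive integer such that every set of k vertices has total degree greater than n. If A is a set of vertices with pairwise distances at least 3, then |A| < k. -/
/-! Vertices at distance at least 3 have disjoint closed neighbourhoods, so
`∑ v ∈ A, (deg v + 1) ≤ n`. If `#A ≥ k`, any `k`-subset of `A` would then have degree sum at most
`n`. -/

open Finset

namespace SimpleGraph

variable {V : Type*} (G : SimpleGraph V)

theorem edist_le_one_of_mem_insert_neighborFinset [DecidableEq V] [G.LocallyFinite] {u w : V}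
    (hw : w ∈ insert u (G.neighborFinset u)) : G.edist u w ≤ 1 := by
  rw [edist_le_one_iff_adj_or_eq]
  rcases mem_insert.1 hw with rfl | hadj
  · exact .inr rfl
  · exact .inl ((G.mem_neighborFinset u w).1 hadj)

theorem dist_le_two_of_mem_insert_neighborFinset [DecidableEq V] [G.LocallyFinite] {u v w : V}
    (hu : w ∈ insert u (G.neighborFinset u)) (hv : w ∈ insert v (G.neighborFinset v)) :
    G.dist u v ≤ 2 := by
  have huv : G.edist u v ≤ 2 := calc
    G.edist u v ≤ G.edist u w + G.edist w v := G.edist_triangle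
    _ = G.edist u w + G.edist v w := by rw [edist_comm (v := v)]
    _ ≤ 1 + 1 := add_le_add (G.edist_le_one_of_mem_insert_neighborFinset hu)
      (G.edist_le_one_of_mem_insert_neighborFinset hv)
  exact ENat.toNat_le_of_le_natCast huv

theorem disjoint_insert_neighborFinset_of_three_le_dist [DecidableEq V] [G.LocallyFinite]
    {u v : V} (h : 3 ≤ G.dist u v) :
    Disjoint (insert u (G.neighborFinset u)) (insert v (G.neighborFinset v)) := by
  rw [Finset.disjoint_left]
  intro w hu hv
  have := G.dist_le_two_of_mem_insert_neighborFinset hu hv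
  omega

theorem sum_degree_add_card_le_card_of_pairwise_three_le_dist [Fintype V] [DecidableRel G.Adj]
    {A : Finset V} (hA : (A : Set V).Pairwise fun u v => 3 ≤ G.dist u v) :
    ∑ v ∈ A, G.degree v + #A ≤ Fintype.card V := by
  classical
  calc ∑ v ∈ A, G.degree v + #A
      = ∑ v ∈ A, #(insert v (G.neighborFinset v)) := by
        rw [card_eq_sum_ones, ← sum_add_distrib]
        refine sum_congr rfl fun v _ => ?_
        rw [card_insert_of_notMem (G.notMem_neighborFinset_self v), card_neighborFinset_eq_degree]
    _ = #(A.biUnion fun v => insert v (G.neighborFinset v)) :=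
        (card_biUnion fun u hu v hv huv =>
          G.disjoint_insert_neighborFinset_of_three_le_dist (hA hu hv huv)).symm
    _ ≤ Fintype.card V := card_le_univ _

end SimpleGraph

theorem card_lt_of_pairwise_dist_ge_three_general {V : Type*} [Fintype V]
    (G : SimpleGraph V) [DecidableRel G.Adj] (k : ℕ)
    (hdeg : ∀ S : Finset V, S.card = k → Fintype.card V < ∑ v ∈ S, G.degree v)
    (A : Finset V) (hA : ∀ u ∈ A, ∀ v ∈ A, u ≠ v → 3 ≤ G.dist u v) :
    A.card < k := by
  by_contra! hkA
  obtain ⟨S, hSA, hS⟩ := exists_subset_card_eq hkA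
  have hsum : ∑ v ∈ S, G.degree v ≤ ∑ v ∈ A, G.degree v := sum_le_sum_of_subset hSA
  have hpack := G.sum_degree_add_card_le_card_of_pairwise_three_le_dist
    fun u hu v hv huv => hA u hu v hv huv
  have := hdeg S hS
  omega

theorem card_lt_of_pairwise_dist_ge_three {V : Type*} [Fintype V] [DecidableEq V]
    (G : SimpleGraph V) [DecidableRel G.Adj] (hG : G.Connected) (k : ℕ) (hk : 0 < k)
    (hdeg : ∀ S : Finset V, S.card = k → Fintype.card V < ∑ v ∈ S, G.degree v)
    (A : Finset V) (hA : ∀ u ∈ A, ∀ v ∈ A, u ≠ v → 3 ≤ G.dist u v) :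
    A.card < k :=
  card_lt_of_pairwise_dist_ge_three_general G k hdeg A hA
end

section
/- Let G be a connected graph on n vertices and k an integer such that every k-subset of vertices has total degree greater than n. Then for any set S of k vertices, there exists a connected subgraph (Steiner tree) of G containing all of S with at most 5k vertices. -/
/-!
Grow a connected vertex set from a single vertex, absorbing the terminals one at a time along a
shortest path from the current set, while keeping inside it a 2-packing (vertices pairwise at
distance at least 3). A shortest path of length `d` from the set to a terminal carries `⌊d/3⌋`
vertices that are pairwise at distance at least 3 and at distance at least 3 from the set, so
absorbing the terminal costs at most `d ≤ 2 + 3⌊d/3⌋` new vertices while the packing grows by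
`⌊d/3⌋`. Vertices of a 2-packing have disjoint neighbourhoods, so the degree hypothesis bounds
every 2-packing by `k - 1`, and the final set has at most `1 + 2k + 3(k - 1)` vertices.
-/

open Finset

namespace SimpleGraph

variable {V : Type*} {G : SimpleGraph V}

def IsTwoPacking (G : SimpleGraph V) (R : Set V) : Prop :=
  R.Pairwise fun u v => 3 ≤ G.dist u v

lemma IsTwoPacking.mono {R R' : Set V} (hR : G.IsTwoPacking R) (h : R' ⊆ R) :
    G.IsTwoPacking R' :=
  Set.Pairwise.mono h hR

lemma IsTwoPacking.union {R M : Set V} (hR : G.IsTwoPacking R) (hM : G.IsTwoPacking M)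
    (hRM : ∀ r ∈ R, ∀ m ∈ M, 3 ≤ G.dist r m) : G.IsTwoPacking (R ∪ M) :=
  Set.pairwise_union.2 ⟨hR, hM, fun r hr m hm _ => ⟨hRM r hr m hm, dist_comm ▸ hRM r hr m hm⟩⟩

lemma disjoint_neighborFinset_of_three_le_dist {u v : V} [Fintype (G.neighborSet u)]
    [Fintype (G.neighborSet v)] (h : 3 ≤ G.dist u v) :
    Disjoint (G.neighborFinset u) (G.neighborFinset v) := by
  refine Finset.disjoint_left.2 fun w hu hv => ?_
  rw [mem_neighborFinset] at hu hv
  have := G.dist_le (.cons hu (.cons hv.symm .nil))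
  simp only [Walk.length_cons, Walk.length_nil] at this
  omega

section Degree

variable [Fintype V] [DecidableRel G.Adj]

lemma IsTwoPacking.sum_degree_le_card {R : Finset V} (hR : G.IsTwoPacking R) :
    ∑ v ∈ R, G.degree v ≤ Fintype.card V := by
  classical
  simp_rw [← card_neighborFinset_eq_degree]
  rw [← card_univ, ← card_biUnion fun u hu v hv huv =>
    disjoint_neighborFinset_of_three_le_dist (hR hu hv huv)]
  exact card_le_univ _

lemma IsTwoPacking.card_lt {k : ℕ}
    (hdeg : ∀ S : Finset V, S.card = k → Fintype.card V < ∑ v ∈ S, G.degree v)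
    {R : Finset V} (hR : G.IsTwoPacking R) : R.card < k := by
  by_contra! hk
  obtain ⟨A, hAR, hA⟩ := exists_subset_card_eq hk
  exact (hdeg A hA).not_ge (hR.mono (coe_subset.2 hAR)).sum_degree_le_card

end Degree

namespace Walk

variable {u v : V}

lemma dist_getVert_le (p : G.Walk u v) (j : ℕ) : G.dist u (p.getVert j) ≤ j :=
  (G.dist_le (p.take j)).trans (by simp)

lemma dist_getVert_le_length_sub (p : G.Walk u v) (j : ℕ) :
    G.dist (p.getVert j) v ≤ p.length - j :=
  (G.dist_le (p.drop j)).trans (by simp)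

lemma le_dist_getVert (hG : G.Connected) (p : G.Walk u v) {c : V} {j : ℕ}
    (hc : p.length ≤ G.dist c v) (hj : j ≤ p.length) : j ≤ G.dist c (p.getVert j) := by
  have := hG.dist_triangle (u := c) (v := p.getVert j) (w := v)
  have := p.dist_getVert_le_length_sub j
  omega

lemma sub_le_dist_getVert (hG : G.Connected) (p : G.Walk u v) (hp : p.length = G.dist u v)
    {i j : ℕ} (hj : j ≤ p.length) : j - i ≤ G.dist (p.getVert i) (p.getVert j) := by
  have := hG.dist_triangle (u := u) (v := p.getVert i) (w := v)
  have := hG.dist_triangle (u := p.getVert i) (v := p.getVert j) (w := v)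
  have := p.dist_getVert_le i
  have := p.dist_getVert_le_length_sub j
  omega

lemma card_union_support_le [DecidableEq V] {t : Finset V} (hu : u ∈ t) (p : G.Walk u v) :
    (t ∪ p.support.toFinset).card ≤ t.card + p.length := by
  have hsub : p.support.toFinset \ t ⊆ p.support.toFinset.erase u :=
    fun w hw => mem_erase.2 ⟨fun h => (mem_sdiff.1 hw).2 (h ▸ hu), (mem_sdiff.1 hw).1⟩
  have hsupp : p.support.toFinset.card ≤ p.length + 1 :=
    p.length_support ▸ List.toFinset_card_le _
  have := card_le_card hsub
  rw [card_erase_of_mem (by simp)] at this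
  rw [union_comm, ← card_sdiff_add_card]
  omega

lemma connected_induce_union_support {t : Set V} (ht : (G.induce t).Connected) (hu : u ∈ t)
    (p : G.Walk u v) : (G.induce (t ∪ {w | w ∈ p.support})).Connected :=
  induce_union_connected ht.preconnected p.connected_induce_support.preconnected
    ⟨u, hu, p.start_mem_support⟩

lemma exists_isTwoPacking_subset_support [DecidableEq V] (hG : G.Connected) (p : G.Walk u v)
    (hp : p.length = G.dist u v) :
    ∃ M : Finset V, M ⊆ p.support.toFinset ∧ G.IsTwoPacking M ∧ p.length ≤ 3 * M.card + 2 ∧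
      ∀ c, p.length ≤ G.dist c v → ∀ m ∈ M, 3 ≤ G.dist c m := by
  set d := p.length
  have hfar {i i' : ℕ} (hi : i < d / 3) (hi' : i' < d / 3) (hne : i ≠ i') :
      3 ≤ G.dist (p.getVert (d - 3 * i)) (p.getVert (d - 3 * i')) := by
    wlog hlt : i' < i generalizing i i'
    · rw [dist_comm]; exact this hi' hi hne.symm (by omega)
    have := p.sub_le_dist_getVert hG hp (i := d - 3 * i) (j := d - 3 * i') (by omega)
    omega
  have hinj : Set.InjOn (fun i => p.getVert (d - 3 * i)) (range (d / 3)) := fun i hi i' hi' h => by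
    by_contra hne
    have := hfar (mem_range.1 hi) (mem_range.1 hi') hne
    simp only at h
    rw [h, dist_self] at this
    omega
  refine ⟨(range (d / 3)).image fun i => p.getVert (d - 3 * i), ?_, ?_, ?_, ?_⟩
  · exact image_subset_iff.2 fun i _ => List.mem_toFinset.2 (p.getVert_mem_support _)
  · rintro _ hm _ hm' hne
    obtain ⟨i, hi, rfl⟩ := mem_image.1 hm
    obtain ⟨i', hi', rfl⟩ := mem_image.1 hm'
    exact hfar (mem_range.1 hi) (mem_range.1 hi') fun h => hne (h ▸ rfl)
  · rw [card_image_of_injOn hinj, card_range]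
    omega
  · intro c hc _ hm
    obtain ⟨i, hi, rfl⟩ := mem_image.1 hm
    have := p.le_dist_getVert hG hc (j := d - 3 * i) (by omega)
    have := mem_range.1 hi
    omega

end Walk

variable [DecidableEq V]

lemma Connected.exists_induce_connected_insert (hG : G.Connected) {t R : Finset V}
    (ht : (G.induce (t : Set V)).Connected) (hRt : R ⊆ t) (hR : G.IsTwoPacking R) (s : V) :
    ∃ t' R' : Finset V, insert s t ⊆ t' ∧ (G.induce (t' : Set V)).Connected ∧ R' ⊆ t' ∧
      G.IsTwoPacking R' ∧ t'.card + 3 * R.card ≤ t.card + 2 + 3 * R'.card := by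
  obtain ⟨x, hx, hxmin⟩ := t.exists_min_image (G.dist · s)
    (coe_nonempty.1 (Set.nonempty_coe_sort.1 ht.nonempty))
  obtain ⟨p, hp⟩ := hG.exists_walk_length_eq_dist x s
  obtain ⟨M, hMp, hM, hMcard, hMfar⟩ := p.exists_isTwoPacking_subset_support hG hp
  have hRM : ∀ r ∈ R, ∀ m ∈ M, 3 ≤ G.dist r m := fun r hr => hMfar r (hp ▸ hxmin r (hRt hr))
  have hdisj : Disjoint R M := Finset.disjoint_left.2 fun r hr hm => by
    have := hRM r hr r hm
    rw [dist_self] at this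
    omega
  refine ⟨t ∪ p.support.toFinset, R ∪ M, ?_, ?_, union_subset_union hRt hMp, ?_, ?_⟩
  · exact insert_subset (mem_union_right _ (List.mem_toFinset.2 p.end_mem_support))
      subset_union_left
  · have : ((t ∪ p.support.toFinset : Finset V) : Set V) = (t : Set V) ∪ {w | w ∈ p.support} := by
      ext; simp
    rw [this]
    exact p.connected_induce_union_support ht hx
  · rw [coe_union]
    exact hR.union hM hRM
  · have := p.card_union_support_le hx
    rw [card_union_of_disjoint hdisj]
    omega

lemma Connected.exists_induce_connected_superset (hG : G.Connected) (S : Finset V)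
    {t R : Finset V} (ht : (G.induce (t : Set V)).Connected) (hRt : R ⊆ t)
    (hR : G.IsTwoPacking R) :
    ∃ t' R' : Finset V, S ∪ t ⊆ t' ∧ (G.induce (t' : Set V)).Connected ∧ R' ⊆ t' ∧
      G.IsTwoPacking R' ∧ t'.card + 3 * R.card ≤ t.card + 2 * S.card + 3 * R'.card := by
  induction S using Finset.induction_on with
  | empty => exact ⟨t, R, by simp, ht, hRt, hR, by simp⟩
  | insert s S hs ih =>
    obtain ⟨t₁, R₁, hSt₁, ht₁, hRt₁, hR₁, hcard₁⟩ := ih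
    obtain ⟨t₂, R₂, hst₂, ht₂, hRt₂, hR₂, hcard₂⟩ :=
      hG.exists_induce_connected_insert ht₁ hRt₁ hR₁ s
    refine ⟨t₂, R₂, ?_, ht₂, hRt₂, hR₂, ?_⟩
    · rw [insert_union]
      exact (insert_subset_insert s hSt₁).trans hst₂
    · rw [card_insert_of_notMem hs]
      omega

end SimpleGraph

theorem steiner_tree_le_five_k_general {V : Type*} [Fintype V]
    (G : SimpleGraph V) [DecidableRel G.Adj] (hG : G.Connected) (k : ℕ)
    (hdeg : ∀ S : Finset V, S.card = k → Fintype.card V < ∑ v ∈ S, G.degree v)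
    (S : Finset V) (hS : S.card = k) :
    ∃ t : Finset V, ↑S ⊆ (↑t : Set V) ∧ (G.induce (↑t : Set V)).Connected ∧
      t.card ≤ 5 * k := by
  classical
  obtain ⟨v⟩ := hG.nonempty
  have hv : (G.induce ({v} : Finset V)).Connected := by
    rw [coe_singleton, SimpleGraph.induce_singleton_eq_top]
    exact SimpleGraph.connected_top
  obtain ⟨t, R, hSt, ht, -, hR, hcard⟩ :=
    hG.exists_induce_connected_superset S hv (empty_subset _) (by simp [SimpleGraph.IsTwoPacking])
  have hRk := hR.card_lt hdeg
  refine ⟨t, coe_subset.2 (subset_union_left.trans hSt), ht, ?_⟩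
  simp only [card_empty, card_singleton] at hcard
  omega

theorem steiner_tree_le_five_k {V : Type*} [Fintype V] [DecidableEq V]
    (G : SimpleGraph V) [DecidableRel G.Adj] (hG : G.Connected) (k : ℕ) (hk : 0 < k)
    (hdeg : ∀ S : Finset V, S.card = k → Fintype.card V < ∑ v ∈ S, G.degree v)
    (S : Finset V) (hS : S.card = k) :
    ∃ t : Finset V, ↑S ⊆ (↑t : Set V) ∧ (G.induce (↑t : Set V)).Connected ∧
      t.card ≤ 5 * k :=
  steiner_tree_le_five_k_general G hG k hdeg S hS
end

section
/- For positive integers r₁, …, r_s with k = r₁ + ⋯ + r_s, one has r₁! r₂! ⋯ r_s! ≥ e^{-k} · r₁^{r₂} r₂^{r₃} ⋯ r_{s-1}^{r_s}. -/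
/-!
Each factor `rᵢ ^ rᵢ₊₁ / rᵢ₊₁!` is a single term of the exponential series of `rᵢ`, so
`rᵢ ^ rᵢ₊₁ ≤ e ^ rᵢ · rᵢ₊₁!`. Multiplying over `i < s - 1`, the exponents sum to at most `k`
and the factorials `r₁!, …, r_{s-1}!` divide `r₀! ⋯ r_{s-1}!`.
-/

open Finset Nat

lemma pow_le_exp_mul_factorial {x : ℝ} (hx : 0 ≤ x) (n : ℕ) : x ^ n ≤ Real.exp x * n ! := by
  have h := Real.pow_div_factorial_le_exp x hx n
  rwa [div_le_iff₀ (by positivity)] at h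

lemma prod_range_pred_succ_dvd {M : Type*} [CommMonoid M] (f : ℕ → M) (n : ℕ) :
    ∏ i ∈ range (n - 1), f (i + 1) ∣ ∏ i ∈ range n, f i := by
  cases n with
  | zero => simp
  | succ n =>
    rw [prod_range_succ']
    exact dvd_mul_right _ _

lemma prod_pow_succ_le_exp_sum_mul_prod_factorial (r : ℕ → ℕ) (n : ℕ) :
    ∏ i ∈ range n, (r i : ℝ) ^ r (i + 1) ≤
      Real.exp (∑ i ∈ range n, (r i : ℝ)) * ∏ i ∈ range n, ((r (i + 1))! : ℝ) := by
  rw [Real.exp_sum, ← prod_mul_distrib]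
  exact prod_le_prod (fun _ _ => by positivity)
    fun i _ => pow_le_exp_mul_factorial (Nat.cast_nonneg _) _

theorem factorial_prod_ge_exp_neg_mul_cyclic_general (s : ℕ) (r : ℕ → ℕ)
    (k : ℕ) (hk : k = ∑ i ∈ Finset.range s, r i) :
    Real.exp (-(k : ℝ)) * ∏ i ∈ Finset.range (s - 1), (r i : ℝ) ^ (r (i + 1)) ≤
      ∏ i ∈ Finset.range s, ((r i).factorial : ℝ) := by
  have hsum : ∑ i ∈ range (s - 1), (r i : ℝ) ≤ k := by
    rw [hk, Nat.cast_sum]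
    exact sum_le_sum_of_subset_of_nonneg (range_subset_range.2 (Nat.sub_le s 1))
      fun _ _ _ => Nat.cast_nonneg _
  have hfact : ∏ i ∈ range (s - 1), ((r (i + 1))! : ℝ) ≤ ∏ i ∈ range s, ((r i)! : ℝ) := by
    exact_mod_cast Nat.le_of_dvd (by positivity) (prod_range_pred_succ_dvd (fun i => (r i)!) s)
  calc Real.exp (-(k : ℝ)) * ∏ i ∈ range (s - 1), (r i : ℝ) ^ r (i + 1)
      ≤ Real.exp (-(k : ℝ)) *
          (Real.exp (∑ i ∈ range (s - 1), (r i : ℝ)) * ∏ i ∈ range (s - 1), ((r (i + 1))! : ℝ)) := by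
        gcongr
        exact prod_pow_succ_le_exp_sum_mul_prod_factorial r (s - 1)
    _ ≤ Real.exp (-(k : ℝ)) * (Real.exp k * ∏ i ∈ range s, ((r i)! : ℝ)) := by gcongr
    _ = ∏ i ∈ range s, ((r i)! : ℝ) := by
        rw [← mul_assoc, ← Real.exp_add, neg_add_cancel, Real.exp_zero, one_mul]

theorem factorial_prod_ge_exp_neg_mul_cyclic (s : ℕ) (hs : 1 ≤ s) (r : ℕ → ℕ)
    (hr : ∀ i < s, 1 ≤ r i) (k : ℕ) (hk : k = ∑ i ∈ Finset.range s, r i) :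
    Real.exp (-(k : ℝ)) * ∏ i ∈ Finset.range (s - 1), (r i : ℝ) ^ (r (i + 1)) ≤
      ∏ i ∈ Finset.range s, ((r i).factorial : ℝ) :=
  factorial_prod_ge_exp_neg_mul_cyclic_general s r k hk
end
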